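/- There exists ρ₀ ∈ (0,1) such that for every ρ ∈ (ρ₀,1) and every ε > 0, the symmetric 10×10 real matrix A_{ρ,ε} is positive definite. -/

import Mathlib

noncomputable section

open Real

/-- The symmetric `10 × 10` matrix `A_{ρ,ε}` arising in the reduced-energy expansion. -/
def Amat (ρ ε : ℝ) : Matrix (Fin 10) (Fin 10) ℝ :=
  !![128 * π * (2 * ρ ^ 2 + 1) * ε / (ρ ^ 2 - 1) ^ 4,
      -(384 * π * (ρ ^ 3 + ρ) * ε ^ ((3 : ℝ) / 2)) / (ρ ^ 2 - 1) ^ 5, 0, 0, 0, 0, 0, 0, 0, 0;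
    -(384 * π * (ρ ^ 3 + ρ) * ε ^ ((3 : ℝ) / 2)) / (ρ ^ 2 - 1) ^ 5,
      192 * π * (3 * ρ ^ 4 + 6 * ρ ^ 2 + 1) * ε ^ 2 / (ρ ^ 2 - 1) ^ 6, 0, 0, 0, 0, 0, 0, 0, 0;
    0, 0, 192 * π * (3 * ρ ^ 4 + 6 * ρ ^ 2 + 1) * ε ^ 2 / (ρ ^ 2 - 1) ^ 6, 0,
      192 * π * ρ * (ρ ^ 2 + 1) * ε ^ 2 / (ρ ^ 2 - 1) ^ 5, 0, 0, 0, 0, 0;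
    0, 0, 0, 16 * π * (2 * ρ ^ 2 + 1) * ε ^ 2 / (ρ ^ 2 - 1) ^ 4, 0, 0, 0, 0, 0, 0;
    0, 0, 192 * π * ρ * (ρ ^ 2 + 1) * ε ^ 2 / (ρ ^ 2 - 1) ^ 5, 0,
      32 * π * (2 * ρ ^ 2 + 1) * ε ^ 2 / (ρ ^ 2 - 1) ^ 4, 0, 0, 0, 0, 0;
    0, 0, 0, 0, 0, 16 * π * (2 * ρ ^ 2 + 1) * ε ^ 2 / (ρ ^ 2 - 1) ^ 4, 0, 0, 0, 0;
    0, 0, 0, 0, 0, 0, 64 * π * ε / (1 - ρ ^ 2) ^ 2, 0,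
      128 * π * ε ^ ((5 : ℝ) / 2) * ρ ^ 3 / (1 - ρ ^ 2) ^ 5, 0;
    0, 0, 0, 0, 0, 0, 0, 64 * π * ε / (1 - ρ ^ 2) ^ 2, 0,
      -(128 * π * ε ^ ((5 : ℝ) / 2) * ρ ^ 3) / (1 - ρ ^ 2) ^ 5;
    0, 0, 0, 0, 0, 0, 128 * π * ε ^ ((5 : ℝ) / 2) * ρ ^ 3 / (1 - ρ ^ 2) ^ 5, 0,
      2240 * π * ε ^ 4 / (1 - ρ ^ 2) ^ 8, 0;
    0, 0, 0, 0, 0, 0, 0, -(128 * π * ε ^ ((5 : ℝ) / 2) * ρ ^ 3) / (1 - ρ ^ 2) ^ 5, 0,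
      2240 * π * ε ^ 4 / (1 - ρ ^ 2) ^ 8]

/-! After a permutation of the coordinates, `A_{ρ,ε}` is block diagonal with `2 × 2` blocks on the
index pairs `{0,1}`, `{2,4}`, `{3,5}`, `{6,8}`, `{7,9}`, and a block `[[a, b], [b, c]]` is positive
definite as soon as `a > 0` and `b² < a c`. In each block the powers of `ρ² - 1` and of `ε` balance
between `b²` and `a c`, so the discriminant conditions reduce to
`6 ρ² (ρ² + 1)² < (2ρ² + 1)(3ρ⁴ + 6ρ² + 1)` (the difference is `3ρ⁴ + 2ρ² + 1`) for the first two
blocks and to `16384 ρ⁶ < 143360` for the last two. Hence `A_{ρ,ε}` is positive definite whenever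
`ρ² < 1` and `ε > 0`, and any `ρ₀ ∈ (0,1)` works. -/

def binaryForm (a b c u v : ℝ) : ℝ := a * u ^ 2 + 2 * b * u * v + c * v ^ 2

theorem mul_binaryForm (a b c u v : ℝ) :
    a * binaryForm a b c u v = (a * u + b * v) ^ 2 + (a * c - b ^ 2) * v ^ 2 := by
  unfold binaryForm
  ring

section binaryForm

variable {a b c : ℝ}

theorem binaryForm_nonneg (ha : 0 < a) (hd : b ^ 2 < a * c) (u v : ℝ) :
    0 ≤ binaryForm a b c u v := by
  refine (mul_nonneg_iff_of_pos_left ha).mp ?_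
  rw [mul_binaryForm]
  have := sub_pos.mpr hd
  positivity

theorem binaryForm_eq_zero (ha : 0 < a) (hd : b ^ 2 < a * c) {u v : ℝ}
    (h : binaryForm a b c u v = 0) : u = 0 ∧ v = 0 := by
  have hsum : (a * u + b * v) ^ 2 + (a * c - b ^ 2) * v ^ 2 = 0 := by
    rw [← mul_binaryForm, h, mul_zero]
  obtain ⟨hu, hv⟩ := (add_eq_zero_iff_of_nonneg (sq_nonneg _)
    (mul_nonneg (sub_pos.mpr hd).le (sq_nonneg _))).mp hsum
  obtain rfl : v = 0 := by simpa [(sub_pos.mpr hd).ne'] using hv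
  simpa [ha.ne'] using hu

end binaryForm

theorem sq_div_pow_lt_mul_div_pow {a b c d : ℝ} {k l m : ℕ} (hd : d ≠ 0) (hklm : k + l = 2 * m)
    (h : b ^ 2 < a * c) : (b / d ^ m) ^ 2 < a / d ^ k * (c / d ^ l) := by
  rw [div_pow, div_mul_div_comm, ← pow_mul, ← pow_add, hklm, mul_comm]
  exact div_lt_div_of_pos_right h (Even.pow_pos ⟨m, by ring⟩ hd)

theorem rpow_half_sq {x : ℝ} (hx : 0 ≤ x) (y : ℝ) : (x ^ (y / 2)) ^ 2 = x ^ y := by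
  rw [← rpow_mul_natCast hx]
  norm_num

theorem six_mul_sq_lt (ρ : ℝ) :
    6 * (ρ ^ 3 + ρ) ^ 2 < (2 * ρ ^ 2 + 1) * (3 * ρ ^ 4 + 6 * ρ ^ 2 + 1) := by
  nlinarith [sq_nonneg ρ, sq_nonneg (ρ ^ 2)]

open Matrix in
theorem dotProduct_Amat_mulVec (ρ ε : ℝ) (x : Fin 10 → ℝ) :
    x ⬝ᵥ Amat ρ ε *ᵥ x =
      binaryForm (Amat ρ ε 0 0) (Amat ρ ε 0 1) (Amat ρ ε 1 1) (x 0) (x 1) +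
      binaryForm (Amat ρ ε 2 2) (Amat ρ ε 2 4) (Amat ρ ε 4 4) (x 2) (x 4) +
      binaryForm (Amat ρ ε 3 3) 0 (Amat ρ ε 5 5) (x 3) (x 5) +
      binaryForm (Amat ρ ε 6 6) (Amat ρ ε 6 8) (Amat ρ ε 8 8) (x 6) (x 8) +
      binaryForm (Amat ρ ε 7 7) (Amat ρ ε 7 9) (Amat ρ ε 9 9) (x 7) (x 9) := by
  simp only [dotProduct, mulVec, Amat, of_apply, cons_val', cons_val_fin_one, Fin.sum_univ_succ,
    Fin.isValue, cons_val_zero, cons_val_succ, Fin.succ_zero_eq_one, Fin.succ_one_eq_two,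
    Fin.reduceSucc, Finset.univ_unique, Fin.default_eq_zero, Finset.sum_singleton, zero_mul,
    add_zero, zero_add, binaryForm, cons_val_one, cons_val, mul_zero]
  ring

theorem Amat_isHermitian (ρ ε : ℝ) : (Amat ρ ε).IsHermitian := by
  ext i j
  fin_cases i <;> fin_cases j <;> rfl

section blocks

variable {ρ ε : ℝ}

theorem Amat_block_zero_one (hρ : ρ ^ 2 - 1 ≠ 0) (hε : 0 < ε) :
    0 < Amat ρ ε 0 0 ∧ Amat ρ ε 0 1 ^ 2 < Amat ρ ε 0 0 * Amat ρ ε 1 1 := by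
  simp only [Amat, Fin.isValue, Matrix.of_apply, Matrix.cons_val', Matrix.cons_val_zero,
    Matrix.cons_val_fin_one, Matrix.cons_val_one]
  refine ⟨by positivity, sq_div_pow_lt_mul_div_pow hρ (by norm_num) ?_⟩
  have hpos : 0 < 24576 * π ^ 2 * ε ^ 3 := by positivity
  rw [neg_sq, mul_pow, rpow_half_sq hε.le, rpow_ofNat]
  linear_combination mul_lt_mul_of_pos_left (six_mul_sq_lt ρ) hpos

theorem Amat_block_two_four (hρ : ρ ^ 2 - 1 ≠ 0) (hε : 0 < ε) :
    0 < Amat ρ ε 2 2 ∧ Amat ρ ε 2 4 ^ 2 < Amat ρ ε 2 2 * Amat ρ ε 4 4 := by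
  simp only [Amat, Fin.isValue, Matrix.of_apply, Matrix.cons_val', Matrix.cons_val,
    Matrix.cons_val_fin_one]
  refine ⟨by positivity, sq_div_pow_lt_mul_div_pow hρ (by norm_num) ?_⟩
  have hpos : 0 < 6144 * π ^ 2 * ε ^ 4 := by positivity
  linear_combination mul_lt_mul_of_pos_left (six_mul_sq_lt ρ) hpos

theorem Amat_block_three_five (hρ : ρ ^ 2 - 1 ≠ 0) (hε : 0 < ε) :
    0 < Amat ρ ε 3 3 ∧ (0 : ℝ) ^ 2 < Amat ρ ε 3 3 * Amat ρ ε 5 5 := by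
  simp only [Amat, Fin.isValue, Matrix.of_apply, Matrix.cons_val', Matrix.cons_val,
    Matrix.cons_val_fin_one]
  exact ⟨by positivity, by rw [zero_pow two_ne_zero]; positivity⟩

theorem Amat_block_six_eight (hρ : ρ ^ 2 < 1) (hε : 0 < ε) :
    0 < Amat ρ ε 6 6 ∧ Amat ρ ε 6 8 ^ 2 < Amat ρ ε 6 6 * Amat ρ ε 8 8 := by
  simp only [Amat, Fin.isValue, Matrix.of_apply, Matrix.cons_val', Matrix.cons_val,
    Matrix.cons_val_fin_one]
  have hD : 1 - ρ ^ 2 ≠ 0 := (sub_pos.mpr hρ).ne'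
  refine ⟨by positivity, sq_div_pow_lt_mul_div_pow hD (by norm_num) ?_⟩
  have hρ6 : ρ ^ 6 < 1 := by
    simpa only [← pow_mul] using pow_lt_one₀ (sq_nonneg ρ) hρ (n := 3) (by norm_num)
  have hpos : 0 < π ^ 2 * ε ^ 5 := by positivity
  rw [mul_pow, mul_pow, rpow_half_sq hε.le, rpow_ofNat]
  linear_combination 16384 * mul_lt_mul_of_pos_left hρ6 hpos + 126976 * hpos

theorem Amat_block_seven_nine (hρ : ρ ^ 2 < 1) (hε : 0 < ε) :
    0 < Amat ρ ε 7 7 ∧ Amat ρ ε 7 9 ^ 2 < Amat ρ ε 7 7 * Amat ρ ε 9 9 := by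
  simpa [Amat, neg_div] using Amat_block_six_eight hρ hε

end blocks

theorem Amat_posDef_of_sq_lt_one {ρ ε : ℝ} (hρ : ρ ^ 2 < 1) (hε : 0 < ε) : (Amat ρ ε).PosDef := by
  have hd : ρ ^ 2 - 1 ≠ 0 := (sub_neg.mpr hρ).ne
  obtain ⟨h00, h01⟩ := Amat_block_zero_one hd hε
  obtain ⟨h22, h24⟩ := Amat_block_two_four hd hε
  obtain ⟨h33, h35⟩ := Amat_block_three_five hd hε
  obtain ⟨h66, h68⟩ := Amat_block_six_eight hρ hε
  obtain ⟨h77, h79⟩ := Amat_block_seven_nine hρ hε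
  refine .of_dotProduct_mulVec_pos (Amat_isHermitian ρ ε) fun x hx => ?_
  rw [star_trivial, dotProduct_Amat_mulVec]
  by_contra! hle
  have q01 := binaryForm_nonneg h00 h01 (x 0) (x 1)
  have q24 := binaryForm_nonneg h22 h24 (x 2) (x 4)
  have q35 := binaryForm_nonneg h33 h35 (x 3) (x 5)
  have q68 := binaryForm_nonneg h66 h68 (x 6) (x 8)
  have q79 := binaryForm_nonneg h77 h79 (x 7) (x 9)
  obtain ⟨hx0, hx1⟩ := binaryForm_eq_zero h00 h01 (by linarith)
  obtain ⟨hx2, hx4⟩ := binaryForm_eq_zero h22 h24 (by linarith)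
  obtain ⟨hx3, hx5⟩ := binaryForm_eq_zero h33 h35 (by linarith)
  obtain ⟨hx6, hx8⟩ := binaryForm_eq_zero h66 h68 (by linarith)
  obtain ⟨hx7, hx9⟩ := binaryForm_eq_zero h77 h79 (by linarith)
  exact hx (funext fun i => by fin_cases i <;> assumption)

/-- For `ρ` close enough to `1`, the matrix `A_{ρ,ε}` is positive definite for every `ε > 0`. -/
theorem Amat_posDef :
    ∃ ρ₀ ∈ Set.Ioo (0 : ℝ) 1, ∀ ρ ∈ Set.Ioo ρ₀ 1, ∀ ε : ℝ, 0 < ε → (Amat ρ ε).PosDef := by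
  refine ⟨1 / 2, by norm_num, fun ρ ⟨hρ₀, hρ₁⟩ ε hε => Amat_posDef_of_sq_lt_one ?_ hε⟩
  nlinarith
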